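/- arXiv:2011.09434 — 2 statements merged into one kernel-verified Lean document; each statement's English description precedes it below -/
import Mathlib

section
/- Let $\pi_1, \pi_2, \pi_3$ be pairwise distinct $k$-permutations with $k \geq 4$, and $t_1, t_2, t_3$ nonzero reals. Then the cover matrix $t_1 A_{\pi_1} + t_2 A_{\pi_2} + t_3 A_{\pi_3}$ is not a constant matrix. -/
/-- The permutation matrix of a `k`-permutation `π`. -/
def permMatrix (k : ℕ) (π : Equiv.Perm (Fin k)) : Matrix (Fin k) (Fin k) ℝ :=
  fun m l => if π m = l then 1 else 0

/-- For pairwise distinct `k`-permutations with `k ≥ 4` and nonzero reals `t₁, t₂, t₃`,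
the cover matrix `t₁ A_{π₁} + t₂ A_{π₂} + t₃ A_{π₃}` is not constant. -/
theorem stmt13 (k : ℕ) (hk : 4 ≤ k) (π₁ π₂ π₃ : Equiv.Perm (Fin k))
    (h12 : π₁ ≠ π₂) (h13 : π₁ ≠ π₃) (h23 : π₂ ≠ π₃)
    (t₁ t₂ t₃ : ℝ) (ht₁ : t₁ ≠ 0) (ht₂ : t₂ ≠ 0) (ht₃ : t₃ ≠ 0) :
    ¬ ∃ c : ℝ, ∀ i j : Fin k,
        (t₁ • permMatrix k π₁ + t₂ • permMatrix k π₂ + t₃ • permMatrix k π₃) i j = c := by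
  rintro ⟨c, hc⟩
  have hkpos : 0 < k := by omega
  have i0 : Fin k := ⟨0, hkpos⟩
  -- there is a zero entry, so c = 0
  have hc0 : c = 0 := by
    have hcard : ({π₁ i0, π₂ i0, π₃ i0} : Finset (Fin k)).card < k := by
      have h1 : ({π₁ i0, π₂ i0, π₃ i0} : Finset (Fin k)).card ≤ 3 := by
        apply le_trans (Finset.card_insert_le _ _)
        have h2 : ({π₂ i0, π₃ i0} : Finset (Fin k)).card ≤ 2 := by
          apply le_trans (Finset.card_insert_le _ _)
          simp
        omega
      omega
    obtain ⟨j, hj⟩ := (Finset.card_pos (s := ({π₁ i0, π₂ i0, π₃ i0} : Finset (Fin k))ᶜ)).mp (by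
      rw [Finset.card_compl, Fintype.card_fin]; omega)
    rw [Finset.mem_compl, Finset.mem_insert, Finset.mem_insert, Finset.mem_singleton] at hj
    push_neg at hj
    have := hc i0 j
    simp [permMatrix, Matrix.add_apply, Matrix.smul_apply, Ne.symm hj.1, Ne.symm hj.2.1, Ne.symm hj.2.2] at this
    exact this.symm
  -- find a nonzero entry
  obtain ⟨i, hi⟩ : ∃ i, π₁ i ≠ π₂ i := by
    by_contra h
    push_neg at h
    exact h12 (Equiv.ext h)
  by_cases h31 : π₃ i = π₁ i
  · -- entry at (i, π₂ i) equals t₂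
    have := hc i (π₂ i)
    have hne3 : π₃ i ≠ π₂ i := by rw [h31]; exact hi
    simp [permMatrix, Matrix.add_apply, Matrix.smul_apply, hi, hne3, hc0] at this
    exact ht₂ this
  · by_cases h32 : π₃ i = π₂ i
    · -- entry at (i, π₁ i) equals t₁
      have := hc i (π₁ i)
      have hne3 : π₃ i ≠ π₁ i := h31
      simp [permMatrix, Matrix.add_apply, Matrix.smul_apply, Ne.symm hi, hne3, hc0] at this
      exact ht₁ this
    · -- all distinct; entry at (i, π₁ i) equals t₁
      have := hc i (π₁ i)
      simp [permMatrix, Matrix.add_apply, Matrix.smul_apply, Ne.symm hi, h31, hc0] at this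
      exact ht₁ this
end

section
/- Let $k \geq 2$, let $t_1, t_2$ be reals with $|t_1| = |t_2| \neq 0$, and let $a \neq b$ be elements of $[k]$. If the vector $v = t_1 e_a + t_2 e_b \in \mathbb{R}^k$ satisfies both $v^T \mathbf{b}^k_k = 0$ and $v^T \mathbf{b}^k_{k-1} = 0$, then we reach a contradiction: no such pair $(a,b)$ exists. Equivalently, for $a \neq b$ in $[k]$ and $|t_1|=|t_2|\neq 0$, the conditions $t_1(\mathbf{b}^k_k)_a + t_2(\mathbf{b}^k_k)_b = 0$ and $t_1(\mathbf{b}^k_{k-1})_a + t_2(\mathbf{b}^k_{k-1})_b = 0$ cannot both hold. -/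
/-!
Cancelling `|t₁| = |t₂| ≠ 0` turns both conditions into equalities of absolute values of
entries, i.e. of binomial coefficients. Two distinct entries of a row of Pascal's triangle agree
only by the symmetry `C(n, r) = C(n, n - r)`, so row `k - 1` forces `a + b = k - 1`, and row
`k - 2` then forces `a + b = k - 2` unless `{a, b} = {0, k - 1}`, where the entries of `b^k_{k-1}`
are `1` and `0`.
-/

/-- The vector `b^k_a ∈ ℝ^k` (0-indexed): entry `i` is `(-1)^i * C(a-1, i)` for `i < a`, else `0`. -/
def bvec (k a : ℕ) : Fin k → ℝ :=
  fun i => if (i : ℕ) < a then (-1 : ℝ) ^ (i : ℕ) * ((a - 1).choose (i : ℕ)) else 0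

namespace Nat

theorem choose_strictMonoOn (n : ℕ) : StrictMonoOn n.choose (Set.Iic (n / 2)) := by
  refine strictMonoOn_of_lt_add_one Set.ordConnected_Iic fun r _ _ hr => ?_
  have hr : 2 * (r + 1) ≤ n := by simp only [Set.mem_Iic] at hr; omega
  refine Nat.lt_of_mul_lt_mul_right (a := r + 1) ?_
  rw [choose_succ_right_eq]
  exact Nat.mul_lt_mul_of_pos_left (by omega) (choose_pos (by omega))

theorem choose_eq_choose_min {n r : ℕ} (hr : r ≤ n) : n.choose r = n.choose (min r (n - r)) := by
  rcases le_total r (n - r) with h | h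
  · rw [min_eq_left h]
  · rw [min_eq_right h, choose_symm hr]

theorem add_eq_of_choose_eq_choose {n r s : ℕ} (hr : r ≤ n) (hs : s ≤ n) (hrs : r ≠ s)
    (h : n.choose r = n.choose s) : r + s = n := by
  rw [choose_eq_choose_min hr, choose_eq_choose_min hs] at h
  have := (choose_strictMonoOn n).injOn (by simp only [Set.mem_Iic]; omega)
    (by simp only [Set.mem_Iic]; omega) h
  omega

end Nat

theorem abs_eq_abs_of_mul_add_mul_eq_zero {R : Type*} [CommRing R] [LinearOrder R]
    [IsStrictOrderedRing R] {s t x y : R} (hst : |s| = |t|) (hs : s ≠ 0)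
    (h : s * x + t * y = 0) : |x| = |y| := by
  have : |s| * |x| = |s| * |y| := by
    rw [← abs_mul, hst, ← abs_mul, eq_neg_of_add_eq_zero_left h, abs_neg]
  exact mul_left_cancel₀ (abs_ne_zero.mpr hs) this

theorem abs_bvec_apply {k h : ℕ} (i : Fin k) :
    |bvec k h i| = if (i : ℕ) < h then ((h - 1).choose i : ℝ) else 0 := by
  unfold bvec
  split_ifs <;> simp

theorem abs_bvec_pred_ne_of_abs_bvec_eq {k : ℕ} {a b : Fin k} (hab : a ≠ b)
    (h : |bvec k k a| = |bvec k k b|) : |bvec k (k - 1) a| ≠ |bvec k (k - 1) b| := by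
  wlog hlt : a < b generalizing a b
  · exact Ne.symm (this hab.symm h.symm (by omega))
  have hab : (a : ℕ) ≠ b := Fin.val_ne_of_ne hab
  rw [Fin.lt_def] at hlt
  simp only [abs_bvec_apply, a.isLt, b.isLt, if_true, Nat.cast_inj] at h
  have hsum : (a : ℕ) + b = k - 1 := Nat.add_eq_of_choose_eq_choose (by omega) (by omega) hab h
  rw [abs_bvec_apply, abs_bvec_apply, if_pos (by omega : (a : ℕ) < k - 1)]
  by_cases hb : (b : ℕ) < k - 1
  · rw [if_pos hb, Ne, Nat.cast_inj]
    intro h'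
    have := Nat.add_eq_of_choose_eq_choose (by omega) (by omega) hab h'
    omega
  · rw [if_neg hb, show (a : ℕ) = 0 by omega]
    simp

theorem stmt15_general (k : ℕ) (t₁ t₂ : ℝ) (habs : |t₁| = |t₂|) (ht₁ : t₁ ≠ 0)
    (a b : Fin k) (hab : a ≠ b)
    (h1 : t₁ * bvec k k a + t₂ * bvec k k b = 0)
    (h2 : t₁ * bvec k (k - 1) a + t₂ * bvec k (k - 1) b = 0) :
    False :=
  abs_bvec_pred_ne_of_abs_bvec_eq hab (abs_eq_abs_of_mul_add_mul_eq_zero habs ht₁ h1)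
    (abs_eq_abs_of_mul_add_mul_eq_zero habs ht₁ h2)

/-- For `k ≥ 2`, `|t₁| = |t₂| ≠ 0` and distinct indices `a ≠ b` in `[k]`, the conditions
`t₁ (b^k_k)_a + t₂ (b^k_k)_b = 0` and `t₁ (b^k_{k-1})_a + t₂ (b^k_{k-1})_b = 0` cannot
both hold. -/
theorem stmt15 (k : ℕ) (hk : 2 ≤ k) (t₁ t₂ : ℝ) (habs : |t₁| = |t₂|) (ht₁ : t₁ ≠ 0)
    (a b : Fin k) (hab : a ≠ b)
    (h1 : t₁ * bvec k k a + t₂ * bvec k k b = 0)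
    (h2 : t₁ * bvec k (k - 1) a + t₂ * bvec k (k - 1) b = 0) :
    False :=
  stmt15_general k t₁ t₂ habs ht₁ a b hab h1 h2
end
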